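/- arXiv:1409.7040 — 7 statements merged into one kernel-verified Lean document; each statement's English description precedes it below -/
import Mathlib

section
/- For all real x > -1 and all integers k, the integral over [0, 2π] of cos(k y) · (sin(y/2))^x dy equals 2π cos(kπ) Γ(x+1) / (2^x Γ(1+x/2+k) Γ(1+x/2−k)). -/
/-!
Substituting `s = sin² (t / 2) = (1 - cos t) / 2` turns `∫₀^π sin^x t dt` into the Beta integral
`2^x B((x+1)/2, (x+1)/2)`, which Legendre's duplication formula brings to the stated closed form at
`k = 0`. Integrating `d/dt (sin^(x+1) t · cos (a t))` over `[0, π]` gives the three-term relation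
`(x + 1 + a) I(a + 1) = (a - x - 1) I(a - 1)` for `I(a) = ∫₀^π cos (a t) sin^x t dt`, and the closed
form satisfies the same relation in steps of `2`. The integral over `[0, 2π]` is `2 I(2k)`.
-/

open intervalIntegral Real

open MeasureTheory Set

theorem integral_rpow_mul_one_sub_rpow {a b : ℝ} (ha : 0 < a) (hb : 0 < b) :
    ∫ s in (0:ℝ)..1, s ^ (a - 1) * (1 - s) ^ (b - 1) = Gamma a * Gamma b / Gamma (a + b) := by
  apply Complex.ofReal_injective
  have hab : Complex.Gamma (a + b) ≠ 0 :=
    Complex.Gamma_ne_zero_of_re_pos (by simpa using add_pos ha hb)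
  rw [← intervalIntegral.integral_ofReal, Complex.ofReal_div, Complex.ofReal_mul,
    ← Complex.Gamma_ofReal, ← Complex.Gamma_ofReal, ← Complex.Gamma_ofReal, Complex.ofReal_add,
    eq_div_iff hab, Complex.Gamma_mul_Gamma_eq_betaIntegral (by simpa) (by simpa), mul_comm,
    Complex.betaIntegral]
  refine congrArg _ (integral_congr fun s hs => ?_)
  rw [uIcc_of_le zero_le_one] at hs
  rw [Complex.ofReal_mul, Complex.ofReal_cpow hs.1, Complex.ofReal_cpow (sub_nonneg.2 hs.2)]
  norm_cast

theorem one_sub_cos_div_two_rpow_mul (a : ℝ) {t : ℝ} (ht : 0 < sin t) :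
    ((1 - cos t) / 2) ^ (a - 1) * (1 - (1 - cos t) / 2) ^ (a - 1) * (sin t / 2)
      = (sin t / 2) ^ (2 * a - 1) := by
  have hprod : (1 - cos t) / 2 * (1 - (1 - cos t) / 2) = (sin t / 2) ^ (2 : ℝ) := by
    rw [rpow_two, div_pow, sin_sq]; ring
  have hs : 0 < sin t / 2 := by positivity
  rw [← mul_rpow (by nlinarith [cos_le_one t]) (by nlinarith [neg_one_le_cos t]), hprod,
    ← rpow_mul hs.le, ← rpow_add_one hs.ne']
  ring_nf

theorem integral_sin_rpow_eq_Gamma_sq_div {x : ℝ} (hx : -1 < x) :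
    ∫ t in (0:ℝ)..π, sin t ^ x = 2 ^ x * (Gamma ((x + 1) / 2) ^ 2 / Gamma (x + 1)) := by
  have hsub := integral_comp_mul_deriv_of_deriv_nonneg (a := 0) (b := π)
    (f := fun t => (1 - cos t) / 2) (f' := fun t => sin t / 2)
    (g := fun s => s ^ ((x + 1) / 2 - 1) * (1 - s) ^ ((x + 1) / 2 - 1))
    (by fun_prop) (fun t _ => by simpa using ((hasDerivAt_cos t).const_sub 1).div_const 2)
    (fun t ht => by
      rw [min_eq_left pi_pos.le, max_eq_right pi_pos.le] at ht
      exact div_nonneg (sin_nonneg_of_nonneg_of_le_pi ht.1.le ht.2.le) zero_le_two)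
  have ha : 0 < (x + 1) / 2 := by linarith
  norm_num only [Function.comp_def, cos_zero, cos_pi] at hsub
  rw [integral_rpow_mul_one_sub_rpow ha ha, add_halves, ← sq] at hsub
  rw [← hsub, ← smul_eq_mul, ← intervalIntegral.integral_smul]
  -- the integrands may differ at `t = π`, where `0 ^ 0 = 1`
  refine integral_congr_ae ?_
  filter_upwards [volume.ae_ne π] with t htπ ht
  rw [uIoc_of_le pi_pos.le] at ht
  have hsin := sin_pos_of_pos_of_lt_pi ht.1 (lt_of_le_of_ne ht.2 htπ)
  rw [one_sub_cos_div_two_rpow_mul _ hsin, show 2 * ((x + 1) / 2) - 1 = x by ring,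
    div_rpow hsin.le zero_le_two, smul_eq_mul, mul_div_cancel₀ _ (by positivity)]

theorem integral_sin_rpow {x : ℝ} (hx : -1 < x) :
    ∫ t in (0:ℝ)..π, sin t ^ x = π * Gamma (x + 1) / (2 ^ x * Gamma (1 + x / 2) ^ 2) := by
  have hdup := Gamma_mul_Gamma_add_half ((x + 1) / 2)
  rw [show (x + 1) / 2 + 1 / 2 = 1 + x / 2 by ring, show 2 * ((x + 1) / 2) = x + 1 by ring,
    show 1 - (x + 1) = -x by ring, rpow_neg zero_le_two] at hdup
  have hA : 0 < Gamma (x + 1) := Gamma_pos_of_pos (by linarith)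
  have hH : 0 < Gamma (1 + x / 2) := Gamma_pos_of_pos (by linarith)
  have hG : Gamma ((x + 1) / 2) = Gamma (x + 1) * √π / (2 ^ x * Gamma (1 + x / 2)) := by
    rw [eq_div_iff (by positivity), ← mul_assoc, mul_comm _ (2 ^ x), mul_assoc, hdup]
    field_simp
  rw [integral_sin_rpow_eq_Gamma_sq_div hx, hG, div_pow, mul_pow, sq_sqrt pi_pos.le]
  field_simp

theorem intervalIntegrable_cos_mul_sin_rpow {x : ℝ} (hx : -1 < x) (a : ℝ) :
    IntervalIntegrable (fun t => cos (a * t) * sin t ^ x) volume 0 π := by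
  have hpos : 0 < π * Gamma (x + 1) / (2 ^ x * Gamma (1 + x / 2) ^ 2) := by
    have := Gamma_pos_of_pos (show 0 < x + 1 by linarith)
    have := Gamma_pos_of_pos (show 0 < 1 + x / 2 by linarith)
    positivity
  -- a function whose integral is nonzero is integrable: non-integrable ones integrate to `0`
  refine (intervalIntegrable_of_integral_ne_zero ?_).continuousOn_mul (by fun_prop)
  rw [integral_sin_rpow hx]
  exact hpos.ne'

theorem hasDerivAt_sin_rpow_mul_cos (x a : ℝ) {t : ℝ} (ht : 0 < sin t) :
    HasDerivAt (fun t => sin t ^ (x + 1) * cos (a * t))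
      ((x + 1 + a) / 2 * (cos ((a + 1) * t) * sin t ^ x)
        + (x + 1 - a) / 2 * (cos ((a - 1) * t) * sin t ^ x)) t := by
  have hsin : HasDerivAt (fun t => sin t ^ (x + 1)) ((x + 1) * sin t ^ x * cos t) t := by
    convert (hasDerivAt_sin t).rpow_const (p := x + 1) (Or.inl ht.ne') using 1
    rw [add_sub_cancel_right]
    ring
  have hcos : HasDerivAt (fun t => cos (a * t)) (-sin (a * t) * a) t := by
    simpa using ((hasDerivAt_id t).const_mul a).cos
  refine (hsin.mul hcos).congr_deriv ?_
  rw [show (a + 1) * t = a * t + t by ring, show (a - 1) * t = a * t - t by ring, cos_add,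
    cos_sub, rpow_add_one ht.ne']
  ring

theorem integral_cos_mul_sin_rpow_recurrence {x : ℝ} (hx : -1 < x) (a : ℝ) :
    (x + 1 + a) * ∫ t in (0:ℝ)..π, cos ((a + 1) * t) * sin t ^ x
      = (a - x - 1) * ∫ t in (0:ℝ)..π, cos ((a - 1) * t) * sin t ^ x := by
  have hx1 : x + 1 ≠ 0 := by linarith
  have hftc := integral_eq_sub_of_hasDeriv_right_of_le pi_pos.le
    (f := fun t => sin t ^ (x + 1) * cos (a * t))
    ((continuous_sin.continuousOn.rpow_const fun _ _ => Or.inr (by linarith)).mul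
      (by fun_prop))
    (fun t ht => (hasDerivAt_sin_rpow_mul_cos x a
      (sin_pos_of_pos_of_lt_pi ht.1 ht.2)).hasDerivWithinAt)
    (((intervalIntegrable_cos_mul_sin_rpow hx _).const_mul _).add
      ((intervalIntegrable_cos_mul_sin_rpow hx _).const_mul _))
  rw [integral_add ((intervalIntegrable_cos_mul_sin_rpow hx _).const_mul _)
    ((intervalIntegrable_cos_mul_sin_rpow hx _).const_mul _), intervalIntegral.integral_const_mul,
    intervalIntegral.integral_const_mul] at hftc
  simp only [sin_pi, sin_zero, zero_rpow hx1, zero_mul, sub_zero] at hftc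
  linear_combination 2 * hftc

-- Valid at the poles too, where `Gamma` is `0`; this is what makes the closed form vanish there.
theorem inv_Gamma_eq_mul_inv_Gamma_add_one (s : ℝ) : (Gamma s)⁻¹ = s * (Gamma (s + 1))⁻¹ := by
  rcases ne_or_eq s 0 with h | rfl
  · rw [Gamma_add_one h, mul_inv, mul_inv_cancel_left₀ h]
  · rw [zero_add, Gamma_zero, inv_zero, zero_mul]

theorem integral_cos_two_mul_nat_mul_sin_rpow {x : ℝ} (hx : -1 < x) (n : ℕ) :
    ∫ t in (0:ℝ)..π, cos (2 * n * t) * sin t ^ x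
      = π * (-1) ^ n * Gamma (x + 1) / (2 ^ x * Gamma (1 + x / 2 + n) * Gamma (1 + x / 2 - n)) := by
  induction n with
  | zero =>
    simpa [div_eq_mul_inv, sq, mul_assoc, mul_comm, mul_left_comm] using integral_sin_rpow hx
  | succ n ih =>
    have hrec := integral_cos_mul_sin_rpow_recurrence hx (2 * n + 1)
    rw [show (2 * n + 1 + 1 : ℝ) = 2 * (n + 1 : ℕ) by push_cast; ring,
      show (2 * n + 1 - 1 : ℝ) = 2 * n by ring] at hrec
    have hpos : 0 < 1 + x / 2 + n := by linarith [n.cast_nonneg (α := ℝ)]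
    have hnum : Gamma (1 + x / 2 + (n + 1 : ℕ)) = (1 + x / 2 + n) * Gamma (1 + x / 2 + n) := by
      rw [← Gamma_add_one hpos.ne']
      push_cast
      ring_nf
    have hden : (Gamma (1 + x / 2 - (n + 1 : ℕ)))⁻¹ = (x / 2 - n) * (Gamma (1 + x / 2 - n))⁻¹ := by
      rw [inv_Gamma_eq_mul_inv_Gamma_add_one]
      push_cast
      ring_nf
    have hstep : ∫ t in (0:ℝ)..π, cos (2 * (n + 1 : ℕ) * t) * sin t ^ x
        = (2 * n - x) / (x + 1 + (2 * n + 1)) * ∫ t in (0:ℝ)..π, cos (2 * n * t) * sin t ^ x := by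
      rw [div_mul_eq_mul_div, eq_div_iff (by linarith)]
      linear_combination hrec
    rw [hstep, ih, div_eq_mul_inv _ (_ * Gamma (1 + x / 2 - (n + 1 : ℕ))), mul_inv, hden, hnum]
    field_simp
    ring

theorem integral_cos_mul_sin_half_rpow (x a : ℝ) :
    ∫ y in (0:ℝ)..2 * π, cos (a * y) * sin (y / 2) ^ x
      = 2 * ∫ t in (0:ℝ)..π, cos (2 * a * t) * sin t ^ x := by
  have h := smul_integral_comp_mul_left (a := 0) (b := π) (fun y => cos (a * y) * sin (y / 2) ^ x) 2
  rw [mul_zero, smul_eq_mul] at h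
  rw [← h]
  congr 1
  refine integral_congr fun t _ => ?_
  rw [mul_div_cancel_left₀ t two_ne_zero, mul_left_comm, mul_assoc]

theorem integral_cos_mul_sin_half_pow (x : ℝ) (hx : x > -1) (k : ℤ) :
    ∫ y in (0:ℝ)..(2 * Real.pi), Real.cos (k * y) * Real.sin (y / 2) ^ x
      = 2 * Real.pi * Real.cos (k * Real.pi) * Real.Gamma (x + 1) /
        ((2 : ℝ) ^ x * Real.Gamma (1 + x / 2 + k) * Real.Gamma (1 + x / 2 - k)) := by
  rw [integral_cos_mul_sin_half_rpow]
  obtain ⟨n, rfl | rfl⟩ := Int.eq_nat_or_neg k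
  · rw [Int.cast_natCast, integral_cos_two_mul_nat_mul_sin_rpow hx, cos_nat_mul_pi]
    ring
  · simp only [Int.cast_neg, Int.cast_natCast, mul_neg, neg_mul, cos_neg]
    rw [integral_cos_two_mul_nat_mul_sin_rpow hx, cos_nat_mul_pi, ← sub_eq_add_neg, sub_neg_eq_add]
    ring
end

section
/- For a positive integer k and α = 1, the integral IS_k(x) = ∫₀^{2π} (sin(kx) − sin(kx−ky)) / sin(y/2) dy equals sin(kx) · Σ_{m=1}^{k} 8/(2m−1), and similarly IC_k(x) = ∫₀^{2π} (cos(kx) − cos(kx−ky)) / sin(y/2) dy equals cos(kx) · Σ_{m=1}^{k} 8/(2m−1). -/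
/-!
Telescoping with `sin p - sin q = 2 sin ((p - q)/2) cos ((p + q)/2)` gives
`sin a - sin (a - k y) = sin (y/2) · ∑_{m<k} 2 cos (a - (2m+1) y/2)`, which removes the singular
denominator. Each `cos (a - (2m+1) y/2)` integrates over `[0, 2π]` to `4 sin a / (2m+1)`, since
`sin (a - (2m+1)π) = -sin a`. The cosine integral is the sine integral at phase `a = kx + π/2`.
-/

open intervalIntegral Real Finset

theorem sin_sub_sin_sub_nat_mul (a y : ℝ) (k : ℕ) :
    sin a - sin (a - k * y) = sin (y / 2) * ∑ m ∈ range k, 2 * cos (a - (2 * m + 1) / 2 * y) := by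
  induction k with
  | zero => simp
  | succ n ih =>
    have hstep : sin (a - n * y) - sin (a - (n + 1) * y)
        = sin (y / 2) * (2 * cos (a - (2 * n + 1) / 2 * y)) := by
      rw [sin_sub_sin]
      ring_nf
    rw [sum_range_succ, mul_add, ← ih, ← hstep]
    push_cast
    ring

theorem integral_cos_sub_mul (a c T : ℝ) (hc : c ≠ 0) :
    ∫ y in (0 : ℝ)..T, cos (a - c * y) = (sin a - sin (a - c * T)) / c := by
  rw [integral_comp_sub_mul (fun t => cos t) hc, integral_cos, mul_zero, sub_zero, smul_eq_mul,
    inv_mul_eq_div]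

theorem integral_cos_sub_half_odd_mul (a : ℝ) (m : ℕ) :
    ∫ y in (0 : ℝ)..2 * π, cos (a - (2 * m + 1) / 2 * y) = 4 * sin a / (2 * m + 1) := by
  have hodd : sin (a - (2 * m + 1) / 2 * (2 * π)) = -sin a := by
    have := sin_sub_nat_mul_pi a (2 * m + 1)
    push_cast at this
    rw [show (2 * m + 1) / 2 * (2 * π) = (2 * m + 1) * π by ring, this, pow_succ, pow_mul]
    simp
  rw [integral_cos_sub_mul _ _ _ (by positivity), hodd]
  field_simp
  ring

theorem integral_sin_sub_sin_sub_nat_mul_div_sin_half (a : ℝ) (k : ℕ) :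
    ∫ y in (0 : ℝ)..2 * π, (sin a - sin (a - k * y)) / sin (y / 2)
      = sin a * ∑ m ∈ range k, 8 / (2 * (m : ℝ) + 1) := by
  have hsum : ∫ y in (0 : ℝ)..2 * π, (sin a - sin (a - k * y)) / sin (y / 2)
      = ∫ y in (0 : ℝ)..2 * π, ∑ m ∈ range k, 2 * cos (a - (2 * m + 1) / 2 * y) := by
    refine integral_congr_uIoo fun y hy => ?_
    rw [Set.uIoo_of_le (by positivity)] at hy
    have hsin : sin (y / 2) ≠ 0 :=
      (sin_pos_of_pos_of_lt_pi (by linarith [hy.1]) (by linarith [hy.2])).ne'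
    simp only [sin_sub_sin_sub_nat_mul, mul_div_cancel_left₀ _ hsin]
  rw [hsum, integral_finsetSum fun m _ => by apply Continuous.intervalIntegrable; fun_prop,
    mul_sum]
  refine sum_congr rfl fun m _ => ?_
  rw [integral_const_mul, integral_cos_sub_half_odd_mul]
  ring

theorem IS_IC_alpha_one_general (k : ℕ) (x : ℝ) :
    (∫ y in (0:ℝ)..(2 * Real.pi),
        (Real.sin (k * x) - Real.sin (k * x - k * y)) / Real.sin (y / 2)
      = Real.sin (k * x) * ∑ m ∈ Finset.range k, 8 / (2 * (m : ℝ) + 1)) ∧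
    (∫ y in (0:ℝ)..(2 * Real.pi),
        (Real.cos (k * x) - Real.cos (k * x - k * y)) / Real.sin (y / 2)
      = Real.cos (k * x) * ∑ m ∈ Finset.range k, 8 / (2 * (m : ℝ) + 1)) := by
  refine ⟨integral_sin_sub_sin_sub_nat_mul_div_sin_half _ k, ?_⟩
  have hcos := integral_sin_sub_sin_sub_nat_mul_div_sin_half (k * x + π / 2) k
  simpa only [add_sub_right_comm, sin_add_pi_div_two] using hcos

theorem IS_IC_alpha_one (k : ℕ) (hk : 1 ≤ k) (x : ℝ) :
    (∫ y in (0:ℝ)..(2 * Real.pi),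
        (Real.sin (k * x) - Real.sin (k * x - k * y)) / Real.sin (y / 2)
      = Real.sin (k * x) * ∑ m ∈ Finset.range k, 8 / (2 * (m : ℝ) + 1)) ∧
    (∫ y in (0:ℝ)..(2 * Real.pi),
        (Real.cos (k * x) - Real.cos (k * x - k * y)) / Real.sin (y / 2)
      = Real.cos (k * x) * ∑ m ∈ Finset.range k, 8 / (2 * (m : ℝ) + 1)) :=
  IS_IC_alpha_one_general k x
end

section
/- For α ∈ (0,1) and with Ω_m = −2^{α−1} Γ(1−α)/(Γ(1−α/2))² · (Γ(1+α/2)/Γ(2−α/2) − Γ(m+α/2)/Γ(1+m−α/2)) for any real m > 0, one has Ω_m + C(α)∫₀^{2π} cos(y)/(4sin²(y/2))^{α/2} dy = 2^{α−1} Γ(1−α)/(Γ(1−α/2))² · Γ(m+α/2)/Γ(1+m−α/2), and this quantity is nonzero for every real m > 0. -/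
/-!
Since `cos y = 1 - X / 2` with `X = 4 sin² (y / 2)`, the integral splits as
`J(α) - J(α - 2) / 2`, where `J(s) = ∫₀^{2π} X^{-s/2} dy`. The symmetry `y ↦ 2π - y` and the
substitution `x = sin² (y / 2)` on `(0, π)` turn `J(s)` into `2^{1-s} B((1 - s) / 2, 1 / 2)`, and
Legendre's duplication formula at `(1 - α) / 2` evaluates the integral as
`2π α Γ(1 - α) / ((2 - α) Γ(1 - α / 2)²)`. Multiplied by `C(α)` this is exactly the first term of
`-Ω_m`, so only the `Γ(m + α / 2)` term survives, and it is positive.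
-/

open intervalIntegral Real MeasureTheory Set

theorem integral_rpow_mul_one_sub_rpow_s8 {u v : ℝ} (hu : 0 < u) (hv : 0 < v) :
    ∫ x in (0:ℝ)..1, x ^ (u - 1) * (1 - x) ^ (v - 1) = Gamma u * Gamma v / Gamma (u + v) := by
  have hreal : Complex.betaIntegral u v =
      ((∫ x in (0:ℝ)..1, x ^ (u - 1) * (1 - x) ^ (v - 1) : ℝ) : ℂ) := by
    rw [Complex.betaIntegral, ← integral_ofReal]
    refine integral_congr fun x hx => ?_
    rw [uIcc_of_le zero_le_one] at hx
    push_cast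
    rw [Complex.ofReal_cpow hx.1, Complex.ofReal_cpow (sub_nonneg.2 hx.2)]
    push_cast
    ring
  have h := Complex.Gamma_mul_Gamma_eq_betaIntegral (s := u) (t := v)
    (by simpa using hu) (by simpa using hv)
  rw [hreal, ← Complex.ofReal_add, Complex.Gamma_ofReal, Complex.Gamma_ofReal,
    Complex.Gamma_ofReal, ← Complex.ofReal_mul, ← Complex.ofReal_mul, Complex.ofReal_inj] at h
  rw [h, mul_div_cancel_left₀ _ (Gamma_pos_of_pos (add_pos hu hv)).ne']

theorem sin_half_pos_of_mem_Ioo {y : ℝ} (hy : y ∈ Ioo 0 π) : 0 < sin (y / 2) :=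
  sin_pos_of_pos_of_lt_pi (by linarith [hy.1]) (by linarith [hy.2, pi_pos])

theorem cos_half_pos_of_mem_Ioo {y : ℝ} (hy : y ∈ Ioo 0 π) : 0 < cos (y / 2) :=
  cos_pos_of_mem_Ioo ⟨by linarith [hy.1, pi_pos], by linarith [hy.2]⟩

theorem hasDerivAt_sin_half_sq (y : ℝ) :
    HasDerivAt (fun y => sin (y / 2) ^ 2) (sin (y / 2) * cos (y / 2)) y := by
  refine ((((hasDerivAt_id y).div_const 2).sin).pow 2).congr_deriv ?_
  simp only [id, Nat.cast_ofNat]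
  ring

theorem strictMonoOn_sin_half_sq : StrictMonoOn (fun y => sin (y / 2) ^ 2) (Ioo 0 π) := by
  intro x hx y hy hxy
  have hs := strictMonoOn_sin (a := x / 2) (b := y / 2)
    ⟨by linarith [hx.1, pi_pos], by linarith [hx.2]⟩
    ⟨by linarith [hy.1, pi_pos], by linarith [hy.2]⟩ (by linarith)
  exact pow_lt_pow_left₀ hs (sin_half_pos_of_mem_Ioo hx).le two_ne_zero

theorem image_sin_half_sq_Ioo : (fun y => sin (y / 2) ^ 2) '' Ioo 0 π = Ioo 0 1 := by
  ext x
  constructor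
  · rintro ⟨y, hy, rfl⟩
    have hc := cos_half_pos_of_mem_Ioo hy
    exact ⟨pow_pos (sin_half_pos_of_mem_Ioo hy) 2, by nlinarith [sin_sq_add_cos_sq (y / 2)]⟩
  · rintro ⟨hx0, hx1⟩
    have hsqrt : √x < 1 := (sqrt_lt' one_pos).2 (by simpa using hx1)
    refine ⟨2 * arcsin √x, ⟨?_, ?_⟩, ?_⟩
    · linarith [arcsin_pos.2 (sqrt_pos.2 hx0)]
    · linarith [arcsin_lt_pi_div_two.2 hsqrt]
    · show sin (2 * arcsin √x / 2) ^ 2 = x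
      rw [show 2 * arcsin √x / 2 = arcsin √x by ring,
        sin_arcsin (by linarith [sqrt_nonneg x]) hsqrt.le, sq_sqrt hx0.le]

theorem integral_Ioo_zero_one_eq_integral_sin_half_sq (g : ℝ → ℝ) :
    ∫ x in Ioo (0:ℝ) 1, g x = ∫ y in Ioo 0 π, sin (y / 2) * cos (y / 2) * g (sin (y / 2) ^ 2) := by
  rw [← image_sin_half_sq_Ioo, integral_image_eq_integral_abs_deriv_smul measurableSet_Ioo
    (fun y _ => (hasDerivAt_sin_half_sq y).hasDerivWithinAt) strictMonoOn_sin_half_sq.injOn]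
  refine setIntegral_congr_fun measurableSet_Ioo fun y hy => ?_
  rw [abs_of_pos (mul_pos (sin_half_pos_of_mem_Ioo hy) (cos_half_pos_of_mem_Ioo hy)), smul_eq_mul]

theorem mul_mul_sq_rpow_mul_sq_rpow {a b : ℝ} (ha : 0 < a) (hb : 0 < b) (r : ℝ) :
    a * b * ((a ^ 2) ^ (r - 1) * (b ^ 2) ^ ((1:ℝ) / 2 - 1)) = (a ^ 2) ^ (r - 1 / 2) := by
  simp only [← rpow_natCast, ← rpow_mul ha.le, ← rpow_mul hb.le]
  norm_num
  rw [show 2 * (r - 1/2) = 1 + 2 * (r - 1) by ring, rpow_add ha, rpow_one, rpow_neg_one]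
  field_simp

theorem integral_sin_half_sq_rpow {s : ℝ} (hs : s < 1) :
    ∫ y in (0:ℝ)..π, (sin (y / 2) ^ 2) ^ (-s / 2) =
      Gamma ((1 - s) / 2) * √π / Gamma (1 - s / 2) := by
  have hbeta := integral_rpow_mul_one_sub_rpow_s8 (u := (1 - s) / 2) (v := 1 / 2)
    (by linarith) one_half_pos
  rw [integral_of_le zero_le_one, integral_Ioc_eq_integral_Ioo,
    integral_Ioo_zero_one_eq_integral_sin_half_sq, Gamma_one_half_eq,
    show (1 - s) / 2 + 1 / 2 = 1 - s / 2 by ring] at hbeta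
  rw [integral_of_le pi_pos.le, integral_Ioc_eq_integral_Ioo, ← hbeta]
  refine setIntegral_congr_fun measurableSet_Ioo fun y hy => ?_
  rw [← cos_sq', mul_mul_sq_rpow_mul_sq_rpow (sin_half_pos_of_mem_Ioo hy)
    (cos_half_pos_of_mem_Ioo hy)]
  ring_nf

theorem integral_zero_two_mul_of_comp_two_mul_sub {f : ℝ → ℝ} {a : ℝ}
    (hf : ∀ x, f (2 * a - x) = f x) (hi : IntervalIntegrable f volume 0 a) :
    ∫ x in (0:ℝ)..2 * a, f x = 2 * ∫ x in (0:ℝ)..a, f x := by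
  have hsub : 2 * a - a = a := by ring
  have hi' : IntervalIntegrable f volume a (2 * a) := by
    have h := (hi.comp_sub_left (2 * a)).symm
    simp only [hf, sub_zero, hsub] at h
    exact h
  have hsymm : ∫ x in a..2 * a, f x = ∫ x in (0:ℝ)..a, f x := by
    have h := integral_comp_sub_left f (2 * a) (a := 0) (b := a)
    simp only [hf, sub_zero, hsub] at h
    exact h.symm
  rw [← integral_add_adjacent_intervals hi hi', hsymm]
  ring

theorem integral_four_sin_half_sq_rpow {s : ℝ} (hs : s < 1) :
    ∫ y in (0:ℝ)..2 * π, (4 * sin (y / 2) ^ 2) ^ (-s / 2) =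
      2 ^ (1 - s) * (Gamma ((1 - s) / 2) * √π / Gamma (1 - s / 2)) := by
  have hpull : ∀ y, (4 * sin (y / 2) ^ 2) ^ (-s / 2) = 2 ^ (-s) * (sin (y / 2) ^ 2) ^ (-s / 2) := by
    intro y
    rw [mul_rpow zero_le_four (sq_nonneg _), show (4:ℝ) = 2 ^ (2:ℝ) by norm_num,
      ← rpow_mul zero_le_two]
    ring_nf
  have hsymm : ∀ y, (sin ((2 * π - y) / 2) ^ 2) ^ (-s / 2) = (sin (y / 2) ^ 2) ^ (-s / 2) := by
    intro y
    rw [show (2 * π - y) / 2 = π - y / 2 by ring, sin_pi_sub]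
  have hpos : 0 < Gamma ((1 - s) / 2) * √π / Gamma (1 - s / 2) := by
    have := Gamma_pos_of_pos (show 0 < (1 - s) / 2 by linarith)
    have := Gamma_pos_of_pos (show 0 < 1 - s / 2 by linarith)
    positivity
  have hint : IntervalIntegrable (fun y => (sin (y / 2) ^ 2) ^ (-s / 2)) volume 0 π :=
    intervalIntegrable_of_integral_ne_zero (by rw [integral_sin_half_sq_rpow hs]; exact hpos.ne')
  simp_rw [hpull]
  rw [intervalIntegral.integral_const_mul, integral_zero_two_mul_of_comp_two_mul_sub hsymm hint,
    integral_sin_half_sq_rpow hs, show 1 - s = 1 + -s by ring, rpow_add two_pos, rpow_one]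
  ring

theorem one_sub_half_div_rpow {X α : ℝ} (hX : 0 ≤ X) (hα : α ≠ 2) :
    (1 - X / 2) / X ^ (α / 2) = X ^ (-α / 2) - X ^ (-(α - 2) / 2) / 2 := by
  rcases hX.eq_or_lt with rfl | hX
  · have h2 : -(α - 2) / 2 ≠ 0 := by contrapose! hα; linarith
    rcases eq_or_ne α 0 with rfl | h0
    · norm_num
    · rw [zero_rpow (by simpa using h0), zero_rpow (by simpa using h0), zero_rpow h2]
      simp
  · rw [show -(α - 2) / 2 = 1 + -(α / 2) by ring, rpow_add hX, rpow_one, neg_div,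
      rpow_neg hX.le]
    field_simp

theorem integral_cos_div_four_sin_half_sq_rpow {α : ℝ} (hα : α < 1) :
    ∫ y in (0:ℝ)..2 * π, cos y / (4 * sin (y / 2) ^ 2) ^ (α / 2) =
      2 * π * α * Gamma (1 - α) / ((2 - α) * Gamma (1 - α / 2) ^ 2) := by
  have hsplit : ∀ y, cos y / (4 * sin (y / 2) ^ 2) ^ (α / 2) =
      (4 * sin (y / 2) ^ 2) ^ (-α / 2) - (4 * sin (y / 2) ^ 2) ^ (-(α - 2) / 2) / 2 := by
    intro y
    rw [← one_sub_half_div_rpow (by positivity) (by linarith), sin_sq_eq_half_sub,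
      show 2 * (y / 2) = y by ring]
    ring_nf
  have hne : ∀ {s : ℝ}, s < 1 → ∫ y in (0:ℝ)..2 * π, (4 * sin (y / 2) ^ 2) ^ (-s / 2) ≠ 0 := by
    intro s hs
    have := Gamma_pos_of_pos (show 0 < (1 - s) / 2 by linarith)
    have := Gamma_pos_of_pos (show 0 < 1 - s / 2 by linarith)
    rw [integral_four_sin_half_sq_rpow hs]
    positivity
  have hα2 : α - 2 < 1 := by linarith
  simp_rw [hsplit]
  rw [intervalIntegral.integral_sub (intervalIntegrable_of_integral_ne_zero (hne hα))
      ((intervalIntegrable_of_integral_ne_zero (hne hα2)).div_const 2),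
    intervalIntegral.integral_div,
    integral_four_sin_half_sq_rpow hα, integral_four_sin_half_sq_rpow hα2,
    show (1 - (α - 2)) / 2 = (1 - α) / 2 + 1 by ring, show 1 - (α - 2) / 2 = 1 - α / 2 + 1 by ring,
    Gamma_add_one (by linarith), Gamma_add_one (by linarith),
    show 1 - (α - 2) = 2 + (1 - α) by ring, rpow_add two_pos]
  have hG : 0 < Gamma (1 - α / 2) := Gamma_pos_of_pos (by linarith)
  have hdup : Gamma ((1 - α) / 2) = Gamma (1 - α) * 2 ^ α * √π / Gamma (1 - α / 2) := by
    rw [eq_div_iff hG.ne']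
    convert Gamma_mul_Gamma_add_half ((1 - α) / 2) using 3 <;> ring_nf
  have hπ : √π ^ 2 = π := sq_sqrt pi_pos.le
  have h2α : (2:ℝ) ^ (1 - α) * 2 ^ α = 2 := by rw [← rpow_add two_pos]; norm_num
  have hα2' : 2 - α ≠ 0 := by linarith
  rw [hdup, rpow_two]
  field_simp
  rw [hπ, mul_assoc (2 ^ (1 - α)), mul_comm (Gamma (1 - α)), ← mul_assoc, h2α]
  ring

theorem omega_plus_integral (α : ℝ) (h0 : 0 < α) (h1 : α < 1) (m : ℝ) (hm : 0 < m) :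
    (-2 ^ (α - 1) * Real.Gamma (1 - α) / (Real.Gamma (1 - α / 2)) ^ 2 *
        (Real.Gamma (1 + α / 2) / Real.Gamma (2 - α / 2) -
          Real.Gamma (m + α / 2) / Real.Gamma (1 + m - α / 2))) +
      ((1 / (2 * Real.pi)) * Real.Gamma (α / 2) / (2 ^ (1 - α) * Real.Gamma ((2 - α) / 2))) *
        (∫ y in (0:ℝ)..(2 * Real.pi),
          Real.cos y / (4 * Real.sin (y / 2) ^ 2) ^ (α / 2))
      = 2 ^ (α - 1) * Real.Gamma (1 - α) / (Real.Gamma (1 - α / 2)) ^ 2 *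
          (Real.Gamma (m + α / 2) / Real.Gamma (1 + m - α / 2)) ∧
    2 ^ (α - 1) * Real.Gamma (1 - α) / (Real.Gamma (1 - α / 2)) ^ 2 *
          (Real.Gamma (m + α / 2) / Real.Gamma (1 + m - α / 2)) ≠ 0 := by
  have hG : 0 < Gamma (1 - α / 2) := Gamma_pos_of_pos (by linarith)
  have hα2 : 2 - α ≠ 0 := by linarith
  have h2α : (2:ℝ) ^ (α - 1) * 2 ^ (1 - α) = 1 := by rw [← rpow_add two_pos]; norm_num
  have hconst : (1 / (2 * π)) * Gamma (α / 2) / (2 ^ (1 - α) * Gamma ((2 - α) / 2)) *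
        (∫ y in (0:ℝ)..2 * π, cos y / (4 * sin (y / 2) ^ 2) ^ (α / 2)) =
      2 ^ (α - 1) * Gamma (1 - α) / Gamma (1 - α / 2) ^ 2 *
        (Gamma (1 + α / 2) / Gamma (2 - α / 2)) := by
    rw [integral_cos_div_four_sin_half_sq_rpow h1, show (2 - α) / 2 = 1 - α / 2 by ring,
      add_comm 1, Gamma_add_one (by linarith), show 2 - α / 2 = 1 - α / 2 + 1 by ring,
      Gamma_add_one (by linarith)]
    field_simp
    linear_combination (-(Gamma (1 - α) / Gamma ((2 - α) / 2) ^ 3)) * h2α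
  have := Gamma_pos_of_pos (show 0 < 1 - α by linarith)
  have := Gamma_pos_of_pos (show 0 < m + α / 2 by linarith)
  have := Gamma_pos_of_pos (show 0 < 1 + m - α / 2 by linarith)
  exact ⟨by linear_combination hconst, by positivity⟩
end

section
/- Let α ∈ (0,1] and let p, q > 0. Then |1/p^α − 1/q^α| ≤ C_α |q − p| / (p^α q^α (p^{1−α} + q^{1−α})) for some constant C_α depending only on α. -/
open Real

theorem rpow_inv_diff_bound (α : ℝ) (h0 : 0 < α) (h1 : α ≤ 1) :
    ∃ C > (0:ℝ), ∀ p q : ℝ, 0 < p → 0 < q →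
      |1 / p ^ α - 1 / q ^ α| ≤
        C * |q - p| / (p ^ α * q ^ α * (p ^ (1 - α) + q ^ (1 - α))) := by
  refine ⟨2, by norm_num, ?_⟩
  have key : ∀ p q : ℝ, 0 < p → 0 < q → p ≤ q →
      (q ^ α - p ^ α) * (p ^ (1 - α) + q ^ (1 - α)) ≤ 2 * (q - p) := by
    intro p q hp hq hpq
    have h1a : (0:ℝ) ≤ 1 - α := by linarith
    have e1 : q ^ α * q ^ (1 - α) = q := by
      rw [← Real.rpow_add hq]; simp
    have e2 : p ^ α * p ^ (1 - α) = p := by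
      rw [← Real.rpow_add hp]; simp
    have i1 : q ^ α * p ^ (1 - α) ≤ q := by
      calc q ^ α * p ^ (1 - α) ≤ q ^ α * q ^ (1 - α) :=
            mul_le_mul_of_nonneg_left (Real.rpow_le_rpow hp.le hpq h1a)
              (Real.rpow_nonneg hq.le _)
        _ = q := e1
    have i2 : p ≤ p ^ α * q ^ (1 - α) := by
      calc p = p ^ α * p ^ (1 - α) := e2.symm
        _ ≤ p ^ α * q ^ (1 - α) :=
            mul_le_mul_of_nonneg_left (Real.rpow_le_rpow hp.le hpq h1a)
              (Real.rpow_nonneg hp.le _)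
    nlinarith [e1, e2, i1, i2]
  have main : ∀ p q : ℝ, 0 < p → 0 < q → p ≤ q →
      |1 / p ^ α - 1 / q ^ α| ≤
        2 * |q - p| / (p ^ α * q ^ α * (p ^ (1 - α) + q ^ (1 - α))) := by
    intro p q hp hq hpq
    have hpa : (0:ℝ) < p ^ α := Real.rpow_pos_of_pos hp _
    have hqa : (0:ℝ) < q ^ α := Real.rpow_pos_of_pos hq _
    have hs : (0:ℝ) < p ^ (1 - α) + q ^ (1 - α) :=
      add_pos (Real.rpow_pos_of_pos hp _) (Real.rpow_pos_of_pos hq _)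
    have hmono : p ^ α ≤ q ^ α := Real.rpow_le_rpow hp.le hpq h0.le
    have lhs_eq : |1 / p ^ α - 1 / q ^ α| = (q ^ α - p ^ α) / (p ^ α * q ^ α) := by
      rw [abs_of_nonneg (by
        have := one_div_le_one_div_of_le hpa hmono
        linarith)]
      field_simp
    rw [lhs_eq, abs_of_nonneg (by linarith : (0:ℝ) ≤ q - p),
      div_le_div_iff₀ (by positivity) (by positivity)]
    have hk := key p q hp hq hpq
    nlinarith [mul_le_mul_of_nonneg_right hk (le_of_lt (mul_pos hpa hqa))]
  intro p q hp hq
  rcases le_total p q with h | h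
  · exact main p q hp hq h
  · have := main q p hq hp h
    calc |1 / p ^ α - 1 / q ^ α| = |1 / q ^ α - 1 / p ^ α| := abs_sub_comm _ _
      _ ≤ 2 * |p - q| / (q ^ α * p ^ α * (q ^ (1 - α) + p ^ (1 - α))) := this
      _ = 2 * |q - p| / (p ^ α * q ^ α * (p ^ (1 - α) + q ^ (1 - α))) := by
          rw [abs_sub_comm]; ring_nf
end

section
/- For every integer j ≥ 1 and α = 1, the operator T f(x) = ∫₀^{2π} (f(x) − f(x−y))/sin(y/2) dy acts diagonally on Fourier modes: T(cos(j·)) (x) = λ_j cos(jx) and T(sin(j·))(x) = λ_j sin(jx) with λ_j = Σ_{m=1}^{j} 8/(2m−1); in particular λ_j ≥ c log(1+j) and λ_j ≤ C(1 + log j) for constants c, C > 0. -/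
open intervalIntegral Real Finset MeasureTheory

/-! The product formulas 2 sin((2m+1)y/2) sin(y/2) = cos(my) − cos((m+1)y) and
2 cos((2m+1)y/2) sin(y/2) = sin((m+1)y) − sin(my) telescope, writing (1 − cos jy)/sin(y/2) and
sin(jy)/sin(y/2) as sums of sines and cosines of half-odd frequency, whose integrals over
[0, 2π] are 4/(2m+1) and 0. Expanding cos(j(x−y)) and sin(j(x−y)) gives the eigenvalue
λ_j = ∑ 8/(2m+1). Termwise, 4 H_j ≤ λ_j ≤ 8 H_j, and log(1+j) ≤ H_j ≤ 1 + log j. -/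

noncomputable def logMultiplier (j : ℕ) : ℝ := ∑ m ∈ range j, 8 / (2 * (m : ℝ) + 1)

lemma two_mul_sin_mul_sin_half (t y : ℝ) :
    2 * sin ((2 * t + 1) * y / 2) * sin (y / 2) = cos (t * y) - cos ((t + 1) * y) := by
  rw [cos_sub_cos, show (t * y + (t + 1) * y) / 2 = (2 * t + 1) * y / 2 by ring,
    show (t * y - (t + 1) * y) / 2 = -(y / 2) by ring, sin_neg]
  ring

lemma two_mul_cos_mul_sin_half (t y : ℝ) :
    2 * cos ((2 * t + 1) * y / 2) * sin (y / 2) = sin ((t + 1) * y) - sin (t * y) := by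
  rw [sin_sub_sin, show ((t + 1) * y - t * y) / 2 = y / 2 by ring,
    show ((t + 1) * y + t * y) / 2 = (2 * t + 1) * y / 2 by ring]
  ring

lemma one_sub_cos_nat_mul_eq_sum (j : ℕ) (y : ℝ) :
    1 - cos (j * y) = ∑ m ∈ range j, 2 * sin ((2 * (m : ℝ) + 1) * y / 2) * sin (y / 2) := by
  simp_rw [two_mul_sin_mul_sin_half]
  simpa using (sum_range_sub' (fun m : ℕ => cos (m * y)) j).symm

lemma sin_nat_mul_eq_sum (j : ℕ) (y : ℝ) :
    sin (j * y) = ∑ m ∈ range j, 2 * cos ((2 * (m : ℝ) + 1) * y / 2) * sin (y / 2) := by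
  simp_rw [two_mul_cos_mul_sin_half]
  simpa using (sum_range_sub (fun m : ℕ => sin (m * y)) j).symm

lemma integral_sin_half_odd_mul (m : ℕ) :
    ∫ y in (0)..(2 * π), sin ((2 * (m : ℝ) + 1) * y / 2) = 4 / (2 * (m : ℝ) + 1) := by
  have hc : (2 * (m : ℝ) + 1) / 2 ≠ 0 := by positivity
  simp_rw [mul_div_right_comm _ _ (2 : ℝ)]
  rw [integral_comp_mul_left sin hc, integral_sin, mul_zero, cos_zero,
    show (2 * (m : ℝ) + 1) / 2 * (2 * π) = m * (2 * π) + π by ring, cos_nat_mul_two_pi_add_pi,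
    smul_eq_mul]
  field_simp
  norm_num

lemma integral_cos_half_odd_mul (m : ℕ) :
    ∫ y in (0)..(2 * π), cos ((2 * (m : ℝ) + 1) * y / 2) = 0 := by
  have hc : (2 * (m : ℝ) + 1) / 2 ≠ 0 := by positivity
  simp_rw [mul_div_right_comm _ _ (2 : ℝ)]
  rw [integral_comp_mul_left cos hc, integral_cos, mul_zero, sin_zero,
    show (2 * (m : ℝ) + 1) / 2 * (2 * π) = π + m * (2 * π) by ring, sin_add_nat_mul_two_pi,
    sin_pi, sub_zero, smul_zero]

lemma integral_div_sin_half (j : ℕ) (a b : ℝ) :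
    ∫ y in (0)..(2 * π), (a * (1 - cos (j * y)) - b * sin (j * y)) / sin (y / 2)
      = logMultiplier j * a := by
  calc _ = ∫ y in (0)..(2 * π), ∑ m ∈ range j,
          (2 * a * sin ((2 * (m : ℝ) + 1) * y / 2)
            - 2 * b * cos ((2 * (m : ℝ) + 1) * y / 2)) := by
        refine integral_congr_ae ?_
        -- on (0, 2π] the only zero of sin(y/2) is y = 2π
        filter_upwards [Measure.ae_ne volume (2 * π)] with y hne hy
        rw [Set.uIoc_of_le two_pi_pos.le] at hy
        have hsin : sin (y / 2) ≠ 0 :=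
          (sin_pos_of_pos_of_lt_pi (by linarith [hy.1]) (by linarith [lt_of_le_of_ne hy.2 hne])).ne'
        rw [div_eq_iff hsin, one_sub_cos_nat_mul_eq_sum, sin_nat_mul_eq_sum, mul_sum, mul_sum,
          ← sum_sub_distrib, sum_mul]
        exact sum_congr rfl fun m _ => by ring
    _ = ∑ m ∈ range j, ∫ y in (0)..(2 * π),
          (2 * a * sin ((2 * (m : ℝ) + 1) * y / 2) - 2 * b * cos ((2 * (m : ℝ) + 1) * y / 2)) :=
        integral_finsetSum fun _ _ => (by fun_prop : Continuous _).intervalIntegrable _ _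
    _ = ∑ m ∈ range j, 8 / (2 * (m : ℝ) + 1) * a := by
        refine sum_congr rfl fun m _ => ?_
        rw [integral_sub ((by fun_prop : Continuous _).intervalIntegrable _ _)
            ((by fun_prop : Continuous _).intervalIntegrable _ _),
          intervalIntegral.integral_const_mul, intervalIntegral.integral_const_mul,
          integral_sin_half_odd_mul, integral_cos_half_odd_mul]
        ring
    _ = logMultiplier j * a := (sum_mul ..).symm

lemma four_mul_log_one_add_le_logMultiplier (j : ℕ) : 4 * log (1 + j) ≤ logMultiplier j := by
  have hharmonic : 4 * (harmonic j : ℝ) ≤ logMultiplier j := by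
    simp only [harmonic, Rat.cast_sum, Rat.cast_inv, Rat.cast_natCast, mul_sum, logMultiplier]
    refine sum_le_sum fun m _ => ?_
    rw [← div_eq_mul_inv, div_le_div_iff₀ (by positivity) (by positivity)]
    push_cast
    linarith
  have hlog := log_add_one_le_harmonic j
  push_cast at hlog
  rw [add_comm]
  linarith

lemma logMultiplier_le_eight_mul_one_add_log (j : ℕ) : logMultiplier j ≤ 8 * (1 + log j) := by
  have hharmonic : logMultiplier j ≤ 8 * (harmonic j : ℝ) := by
    simp only [harmonic, Rat.cast_sum, Rat.cast_inv, Rat.cast_natCast, mul_sum, logMultiplier]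
    refine sum_le_sum fun m _ => ?_
    rw [← div_eq_mul_inv, div_le_div_iff₀ (by positivity) (by positivity)]
    push_cast
    linarith
  linarith [harmonic_le_one_add_log j]

theorem log_operator_diagonal :
    (∀ j : ℕ, 1 ≤ j → ∀ x : ℝ,
      (∫ y in (0:ℝ)..(2 * Real.pi),
          (Real.cos (j * x) - Real.cos (j * (x - y))) / Real.sin (y / 2)
        = (∑ m ∈ Finset.range j, 8 / (2 * (m : ℝ) + 1)) * Real.cos (j * x)) ∧
      (∫ y in (0:ℝ)..(2 * Real.pi),
          (Real.sin (j * x) - Real.sin (j * (x - y))) / Real.sin (y / 2)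
        = (∑ m ∈ Finset.range j, 8 / (2 * (m : ℝ) + 1)) * Real.sin (j * x))) ∧
    ∃ c > (0:ℝ), ∃ C > (0:ℝ), ∀ j : ℕ, 1 ≤ j →
      c * Real.log (1 + j) ≤ ∑ m ∈ Finset.range j, 8 / (2 * (m : ℝ) + 1) ∧
      ∑ m ∈ Finset.range j, 8 / (2 * (m : ℝ) + 1) ≤ C * (1 + Real.log j) := by
  refine ⟨fun j _ x => ⟨?_, ?_⟩, 4, by norm_num, 8, by norm_num, fun j _ =>
    ⟨four_mul_log_one_add_le_logMultiplier j, logMultiplier_le_eight_mul_one_add_log j⟩⟩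
  · refine (integral_congr fun y _ => ?_).trans
      (integral_div_sin_half j (cos (j * x)) (sin (j * x)))
    simp only [mul_sub, cos_sub]
    ring
  · refine (integral_congr fun y _ => ?_).trans
      (integral_div_sin_half j (sin (j * x)) (-cos (j * x)))
    simp only [mul_sub, sin_sub]
    ring
end

section
/- Let α ∈ (1,2) and m ≥ 2 an integer, and define Ω_k = −2^{α−1} Γ(1−α)/(Γ(1−α/2))² (Γ(1+α/2)/Γ(2−α/2) − Γ(k+α/2)/Γ(1+k−α/2)). Then there exists a constant C > 0 such that for every integer p ≥ 2, |pm(Ω_{pm} − Ω_m)| ≥ C (pm)^α. -/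
set_option maxHeartbeats 1000000

open Real

/-- Wendel-type upper bound: `Γ(y+s) ≤ Γ(y) * y^s` for `0 < s < 1`, `0 < y`. -/
lemma gamma_upper_aux {s y : ℝ} (hs0 : 0 < s) (hs1 : s < 1) (hy : 0 < y) :
    Gamma (y + s) ≤ Gamma y * y ^ s := by
  have h := Real.Gamma_mul_add_mul_le_rpow_Gamma_mul_rpow_Gamma hy (by linarith : (0:ℝ) < y + 1)
    (by linarith : (0:ℝ) < 1 - s) hs0 (by ring)
  have e : (1 - s) * y + s * (y + 1) = y + s := by ring
  rw [e] at h
  have h2 : Gamma (y + 1) = y * Gamma y := by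
    rw [Real.Gamma_add_one hy.ne']
  rw [h2] at h
  have hGy : 0 < Gamma y := Real.Gamma_pos_of_pos hy
  calc Gamma (y + s) ≤ Gamma y ^ (1 - s) * (y * Gamma y) ^ s := h
    _ = Gamma y * y ^ s := by
        rw [Real.mul_rpow hy.le hGy.le, ← mul_assoc, mul_comm (Gamma y ^ (1-s)),
          mul_assoc, ← Real.rpow_add hGy]
        norm_num
        ring

/-- Wendel-type lower bound: `y * Γ(y) * (y+s)^(s-1) ≤ Γ(y+s)`. -/
lemma gamma_lower_aux {s y : ℝ} (hs0 : 0 < s) (hs1 : s < 1) (hy : 0 < y) :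
    y * Gamma y * (y + s) ^ (s - 1) ≤ Gamma (y + s) := by
  have hys : 0 < y + s := by linarith
  have h := Real.Gamma_mul_add_mul_le_rpow_Gamma_mul_rpow_Gamma hys
    (by linarith : (0:ℝ) < y + s + 1) hs0 (by linarith : (0:ℝ) < 1 - s) (by ring)
  have e : s * (y + s) + (1 - s) * (y + s + 1) = y + 1 := by ring
  rw [e] at h
  have hG : 0 < Gamma (y + s) := Real.Gamma_pos_of_pos hys
  have h2 : Gamma (y + s + 1) = (y + s) * Gamma (y + s) := Real.Gamma_add_one hys.ne'
  have h3 : Gamma (y + 1) = y * Gamma y := Real.Gamma_add_one hy.ne'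
  rw [h2, h3] at h
  have h4 : Gamma (y+s) ^ s * ((y + s) * Gamma (y+s)) ^ (1 - s)
      = Gamma (y + s) * (y + s) ^ (1 - s) := by
    rw [Real.mul_rpow hys.le hG.le, mul_comm ((y+s) ^ (1-s)), ← mul_assoc,
      ← Real.rpow_add hG]
    norm_num
  rw [h4] at h
  -- h : y * Gamma y ≤ Gamma (y + s) * (y + s) ^ (1 - s)
  have key : (y + s) ^ (s - 1) * (y + s) ^ (1 - s) = 1 := by
    rw [← Real.rpow_add hys]; norm_num
  calc y * Gamma y * (y + s) ^ (s - 1)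
      ≤ Gamma (y + s) * (y + s) ^ (1 - s) * (y + s) ^ (s - 1) := by
        apply mul_le_mul_of_nonneg_right h (Real.rpow_nonneg hys.le _)
    _ = Gamma (y + s) := by rw [mul_assoc, mul_comm ((y+s) ^ (1-s)), key, mul_one]

theorem omega_difference_growth (α : ℝ) (h1 : 1 < α) (h2 : α < 2)
    (m : ℕ) (hm : 2 ≤ m) :
    ∃ C > (0:ℝ), ∀ p : ℕ, 2 ≤ p →
      C * ((p * m : ℕ) : ℝ) ^ α ≤
        |((p * m : ℕ) : ℝ) *
          ((-(2:ℝ) ^ (α - 1) * Real.Gamma (1 - α) / (Real.Gamma (1 - α / 2)) ^ 2 *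
              (Real.Gamma (1 + α / 2) / Real.Gamma (2 - α / 2) -
                Real.Gamma ((p * m : ℕ) + α / 2) /
                  Real.Gamma (1 + (p * m : ℕ) - α / 2))) -
            (-(2:ℝ) ^ (α - 1) * Real.Gamma (1 - α) / (Real.Gamma (1 - α / 2)) ^ 2 *
              (Real.Gamma (1 + α / 2) / Real.Gamma (2 - α / 2) -
                Real.Gamma (m + α / 2) / Real.Gamma (1 + m - α / 2))))| := by
  set s : ℝ := α - 1 with hs_def
  have hs0 : 0 < s := by rw [hs_def]; linarith
  have hs1 : s < 1 := by rw [hs_def]; linarith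
  -- the positive constant A
  set A : ℝ := -(2:ℝ) ^ (α - 1) * Real.Gamma (1 - α) / (Real.Gamma (1 - α / 2)) ^ 2 with hA_def
  have hG2a : 0 < Gamma (2 - α) := Real.Gamma_pos_of_pos (by linarith)
  have hG1a : Gamma (1 - α) < 0 := by
    have h' : Gamma (1 - α + 1) = (1 - α) * Gamma (1 - α) :=
      Real.Gamma_add_one (by intro hz; have := sub_eq_zero.mp hz; linarith)
    have : Gamma (2 - α) = (1 - α) * Gamma (1 - α) := by
      rw [← h']; congr 1; ring
    nlinarith [Real.rpow_pos_of_pos (by norm_num : (0:ℝ) < 2) (α - 1)]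
  have h2p : 0 < (2:ℝ) ^ (α - 1) := Real.rpow_pos_of_pos (by norm_num) _
  have hGa2 : 0 < Gamma (1 - α / 2) := Real.Gamma_pos_of_pos (by linarith)
  have hA : 0 < A := by
    rw [hA_def]
    apply div_pos
    · nlinarith
    · positivity
  refine ⟨A * s / 8, by positivity, ?_⟩
  intro p hp
  set K : ℝ := ((p * m : ℕ) : ℝ) with hK_def
  have hmR : (2:ℝ) ≤ (m:ℝ) := by exact_mod_cast hm
  have hpR : (2:ℝ) ≤ (p:ℝ) := by exact_mod_cast hp
  have hK2m : 2 * (m:ℝ) ≤ K := by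
    rw [hK_def]; push_cast; nlinarith
  have hK4 : (4:ℝ) ≤ K := by nlinarith
  have hK0 : (0:ℝ) < K := by linarith
  set Y : ℝ := K + 1 - α / 2 with hY_def
  set ym : ℝ := (m:ℝ) + 1 - α / 2 with hym_def
  have hY0 : 0 < Y := by rw [hY_def]; linarith
  have hym0 : 0 < ym := by rw [hym_def]; linarith
  have hKY : K ≤ Y := by rw [hY_def]; linarith
  have hY4 : (4:ℝ) ≤ Y := by linarith
  have eq1 : K + α / 2 = Y + s := by rw [hY_def, hs_def]; ring
  have eq2 : 1 + K - α / 2 = Y := by rw [hY_def]; ring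
  have eq3 : (m:ℝ) + α / 2 = ym + s := by rw [hym_def, hs_def]; ring
  have eq4 : 1 + (m:ℝ) - α / 2 = ym := by rw [hym_def]; ring
  rw [eq1, eq2, eq3, eq4]
  have hGY : 0 < Gamma Y := Real.Gamma_pos_of_pos hY0
  have hGym : 0 < Gamma ym := Real.Gamma_pos_of_pos hym0
  have hYs : 0 < Y + s := by linarith
  -- upper bound on c_m
  have hcm_ub : Gamma (ym + s) / Gamma ym ≤ ym ^ s := by
    rw [div_le_iff₀ hGym]
    calc Gamma (ym + s) ≤ Gamma ym * ym ^ s := gamma_upper_aux hs0 hs1 hym0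
      _ = ym ^ s * Gamma ym := by ring
  -- lower bound on c_{pm}
  have hcP_lb : (1 - s / 4) * Y ^ s ≤ Gamma (Y + s) / Gamma Y := by
    rw [le_div_iff₀ hGY]
    refine le_trans ?_ (gamma_lower_aux hs0 hs1 hY0)
    have e : (Y + s) ^ (s - 1) = (Y + s) ^ s / (Y + s) := by
      rw [Real.rpow_sub hYs, Real.rpow_one]
    rw [e, show Y * Gamma Y * ((Y + s) ^ s / (Y + s)) = Y * Gamma Y * (Y + s) ^ s / (Y + s)
      from by ring, le_div_iff₀ hYs]
    have h1' : Y ^ s ≤ (Y + s) ^ s := Real.rpow_le_rpow hY0.le (by linarith) hs0.le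
    have h2' : (1 - s / 4) * (Y + s) ≤ Y := by nlinarith
    nlinarith [mul_le_mul_of_nonneg_right
      (mul_le_mul h2' h1' (Real.rpow_nonneg hY0.le s) (by linarith : (0:ℝ) ≤ Y)) hGY.le]
  -- comparing ym with Y
  have hym_ub : ym ≤ (5 / 8) * Y := by
    rw [hym_def, hY_def]; nlinarith
  have hym_s : ym ^ s ≤ (1 - 3 / 8 * s) * Y ^ s := by
    have hb : ((5:ℝ) / 8) ^ s ≤ 1 - 3 / 8 * s := by
      have hber := rpow_one_add_le_one_add_mul_self
        (s := -(3/8 : ℝ)) (by norm_num) hs0.le hs1.le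
      norm_num at hber
      linarith
    calc ym ^ s ≤ ((5 / 8) * Y) ^ s := Real.rpow_le_rpow hym0.le hym_ub hs0.le
      _ = (5 / 8 : ℝ) ^ s * Y ^ s := Real.mul_rpow (by norm_num) hY0.le
      _ ≤ (1 - 3 / 8 * s) * Y ^ s := by
          nlinarith [Real.rpow_nonneg hY0.le s]
  have hKs : K ^ s ≤ Y ^ s := Real.rpow_le_rpow hK0.le hKY hs0.le
  have hdiff : s / 8 * K ^ s ≤ Gamma (Y + s) / Gamma Y - Gamma (ym + s) / Gamma ym := by
    nlinarith [Real.rpow_nonneg hY0.le s]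
  -- rewrite the absolute value
  set B : ℝ := Gamma (1 + α / 2) / Gamma (2 - α / 2) with hB_def
  set cP : ℝ := Gamma (Y + s) / Gamma Y with hcP_def
  set cm : ℝ := Gamma (ym + s) / Gamma ym with hcm_def
  have habs : |K * (A * (B - cP) - A * (B - cm))| = K * A * (cP - cm) := by
    have hcmcP : cm ≤ cP := by nlinarith [Real.rpow_nonneg hK0.le s]
    have hnp : K * (A * (B - cP) - A * (B - cm)) ≤ 0 := by
      nlinarith [mul_nonneg (mul_nonneg hK0.le hA.le) (sub_nonneg.2 hcmcP)]
    rw [abs_of_nonpos hnp]; ring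
  rw [habs]
  have hKα : K ^ α = K * K ^ s := by
    rw [show α = 1 + s by rw [hs_def]; ring, Real.rpow_add hK0, Real.rpow_one]
  rw [hKα]
  have hfin := mul_le_mul_of_nonneg_left hdiff (by positivity : (0:ℝ) ≤ K * A)
  calc A * s / 8 * (K * K ^ s) = K * A * (s / 8 * K ^ s) := by ring
    _ ≤ K * A * (cP - cm) := hfin
end

section
/- Let α = 1, m ≥ 2 an integer and Ω_k = −(2/π)Σ_{j=2}^{k} 1/(2j−1). Let g = Σ_{p>1} g_p sin(pmx) ∈ H^{k−1}(𝕋) and define h_p = g_p/(pm(Ω_{pm} − Ω_m)). Then |h_1|² + Σ_{p>1} |h_p|² (pm)^{2k}(1+log(pm))² ≤ C ‖g‖²_{H^{k−1}} for a constant C depending only on m. -/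
open Real Finset

private lemma tele_bound (m : ℕ) : ∀ N, m ≤ N →
    Real.log (2 * (N : ℝ) + 1) - Real.log (2 * (m : ℝ) + 1) ≤
      2 * ∑ j ∈ Finset.Ioc m N, (1 / (2 * (j : ℝ) - 1)) := by
  intro N hN
  induction N, hN using Nat.le_induction with
  | base => simp
  | succ N hN ih =>
    rw [Finset.sum_Ioc_succ_top (by omega)]
    have h1 : (0:ℝ) < 2 * (N:ℝ) + 1 := by positivity
    have h2 : (0:ℝ) < (2 * (N:ℝ) + 3) / (2 * (N:ℝ) + 1) := by positivity
    have key : Real.log (2 * (N:ℝ) + 3) - Real.log (2 * (N:ℝ) + 1) ≤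
        2 / (2 * (N:ℝ) + 1) := by
      have hthis := Real.log_le_sub_one_of_pos h2
      rw [Real.log_div (by positivity) (by positivity)] at hthis
      have heq : (2 * (N:ℝ) + 3) / (2 * (N:ℝ) + 1) - 1 = 2 / (2 * (N:ℝ) + 1) := by
        field_simp; ring
      linarith [heq ▸ hthis]
    push_cast
    push_cast at ih
    rw [show (2:ℝ) * ((N:ℝ) + 1) + 1 = 2 * (N:ℝ) + 3 from by ring]
    have hterm : (1 : ℝ) / (2 * ((N:ℝ) + 1) - 1) = 1 / (2 * (N:ℝ) + 1) := by
      rw [show (2:ℝ) * ((N:ℝ) + 1) - 1 = 2 * (N:ℝ) + 1 from by ring]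
    have h2d : (2:ℝ) / (2 * (N:ℝ) + 1) = 2 * (1 / (2 * (N:ℝ) + 1)) := by
      rw [mul_one_div]
    linarith [key, ih, hterm, h2d]

private lemma sum_ge_quarter (m p : ℕ) (hm : 2 ≤ m) (hp : 2 ≤ p) :
    (1/4 : ℝ) ≤ ∑ j ∈ Finset.Ioc m (p * m), (1 / (2 * (j : ℝ) - 1)) := by
  have hpm : m < p * m := by nlinarith
  have hcard : (Finset.Ioc m (p * m)).card = p * m - m := by
    rw [Nat.card_Ioc]
  have hle : ∀ j ∈ Finset.Ioc m (p * m), (1 / (2 * ((p*m : ℕ) : ℝ))) ≤ 1 / (2 * (j : ℝ) - 1) := by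
    intro j hj
    rw [Finset.mem_Ioc] at hj
    have hj1 : (j : ℝ) ≤ ((p*m : ℕ) : ℝ) := by exact_mod_cast hj.2
    have hj2 : (2:ℝ) < (j : ℝ) := by exact_mod_cast lt_of_le_of_lt hm (by exact_mod_cast hj.1)
    apply one_div_le_one_div_of_le (by linarith)
    linarith
  have hsum : (Finset.Ioc m (p * m)).card • (1 / (2 * ((p*m : ℕ) : ℝ))) ≤
      ∑ j ∈ Finset.Ioc m (p * m), (1 / (2 * (j : ℝ) - 1)) :=
    Finset.card_nsmul_le_sum _ _ _ hle
  rw [hcard, nsmul_eq_mul] at hsum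
  refine le_trans ?_ hsum
  have hc : ((p * m - m : ℕ) : ℝ) = (p : ℝ) * m - m := by
    push_cast [Nat.cast_sub hpm.le]; ring
  have hmpos : (0:ℝ) < (m:ℝ) := by positivity
  have hppos : (2:ℝ) ≤ (p:ℝ) := by exact_mod_cast hp
  have hpm' : (0:ℝ) < ((p*m : ℕ) : ℝ) := by
    exact_mod_cast Nat.mul_pos (by omega : 0 < p) (by omega : 0 < m)
  rw [hc, mul_one_div, div_le_div_iff₀ (by norm_num) (by positivity)]
  push_cast
  nlinarith [mul_nonneg (sub_nonneg.mpr hppos) hmpos.le]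

/-- The main pointwise bound: `1 + log (p*m) ≤ 4*(2 + log m) * S`. -/
private lemma log_le_sum (m p : ℕ) (hm : 2 ≤ m) (hp : 2 ≤ p) :
    1 + Real.log ((p * m : ℕ) : ℝ) ≤
      (4 * (2 + Real.log m)) * ∑ j ∈ Finset.Ioc m (p * m), (1 / (2 * (j : ℝ) - 1)) := by
  set S := ∑ j ∈ Finset.Ioc m (p * m), (1 / (2 * (j : ℝ) - 1)) with hS
  have hS4 : (1/4 : ℝ) ≤ S := sum_ge_quarter m p hm hp
  have hpm : m ≤ p * m := Nat.le_mul_of_pos_left m (by omega)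
  have htele := tele_bound m (p * m) hpm
  have hmpos : (0:ℝ) < (m:ℝ) := by positivity
  have hppos : (0:ℝ) < (p:ℝ) := by positivity
  have hp2 : (2:ℝ) ≤ (p:ℝ) := by exact_mod_cast hp
  have hm2 : (2:ℝ) ≤ (m:ℝ) := by exact_mod_cast hm
  -- log p ≤ 2S + 1/2
  have hlogp : Real.log p ≤ 2 * S + 1/2 := by
    have h1 : Real.log ((p:ℝ) * (2 * m + 1)) ≤ Real.log (2 * ((p*m:ℕ):ℝ) + 1) + 1/2 := by
      have hratio : (p:ℝ) * (2 * m + 1) / (2 * ((p*m:ℕ):ℝ) + 1) ≤ 3/2 := by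
        push_cast
        rw [div_le_iff₀ (by positivity)]
        nlinarith
      have hlograt := Real.log_le_sub_one_of_pos
        (show (0:ℝ) < (p:ℝ) * (2 * m + 1) / (2 * ((p*m:ℕ):ℝ) + 1) by positivity)
      rw [Real.log_div (by positivity) (by positivity)] at hlograt
      nlinarith [hlograt, hratio]
    rw [Real.log_mul (by positivity) (by positivity)] at h1
    have h2 : Real.log (2 * ((p*m:ℕ):ℝ) + 1) - Real.log (2 * (m:ℝ) + 1) ≤ 2 * S := htele
    have h3 : Real.log (2 * (m:ℝ) + 1) ≤ Real.log (2 * m + 1) := le_refl _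
    linarith
  have hlogpm : Real.log ((p * m : ℕ) : ℝ) = Real.log p + Real.log m := by
    push_cast
    exact Real.log_mul (by positivity) (by positivity)
  have hlogm : (0:ℝ) ≤ Real.log m := Real.log_nonneg (by linarith)
  -- combine: 1 + log p + log m ≤ 3/2 + log m + 2S ≤ (3/2 + log m)*4S + 2S
  have h4 : (3/2 + Real.log m) ≤ (3/2 + Real.log m) * (4 * S) := by
    nlinarith
  rw [hlogpm]
  nlinarith

theorem inverse_coefficient_bound (m : ℕ) (hm : 2 ≤ m) :
    ∃ C > (0:ℝ), ∀ k : ℕ, 1 ≤ k → ∀ g : ℕ → ℝ, (∀ p ≤ 1, g p = 0) →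
      Summable (fun p : ℕ => (g p) ^ 2 * ((p * m : ℕ) : ℝ) ^ (2 * (k - 1))) →
      (g 1 / (((1 * m : ℕ) : ℝ) *
            ((-(2 / Real.pi)) * ∑ j ∈ Finset.Icc 2 (1 * m), 1 / (2 * (j : ℝ) - 1) -
              (-(2 / Real.pi)) * ∑ j ∈ Finset.Icc 2 m, 1 / (2 * (j : ℝ) - 1)))) ^ 2 +
        (∑' p : ℕ,
          (g p / (((p * m : ℕ) : ℝ) *
              ((-(2 / Real.pi)) * ∑ j ∈ Finset.Icc 2 (p * m), 1 / (2 * (j : ℝ) - 1) -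
                (-(2 / Real.pi)) * ∑ j ∈ Finset.Icc 2 m, 1 / (2 * (j : ℝ) - 1)))) ^ 2 *
            ((p * m : ℕ) : ℝ) ^ (2 * k) * (1 + Real.log ((p * m : ℕ) : ℝ)) ^ 2)
      ≤ C * ∑' p : ℕ, (g p) ^ 2 * ((p * m : ℕ) : ℝ) ^ (2 * (k - 1)) := by
  have hpi : (0:ℝ) < Real.pi := Real.pi_pos
  have hlogm : (0:ℝ) ≤ Real.log m := Real.log_nonneg (by exact_mod_cast by omega)
  set A : ℝ := 4 * (2 + Real.log m) with hA
  have hApos : 0 < A := by positivity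
  refine ⟨Real.pi^2 / 4 * A^2, by positivity, ?_⟩
  intro k hk g hg0 hsum
  have hg1 : g 1 = 0 := hg0 1 le_rfl
  rw [hg1]
  simp only [zero_div, ne_eq, OfNat.ofNat_ne_zero, not_false_eq_true, zero_pow, zero_add]
  -- pointwise bound on the terms of the tsum
  set C : ℝ := Real.pi^2 / 4 * A^2 with hC
  have hCpos : 0 < C := by positivity
  have key : ∀ p : ℕ,
      (g p / (((p * m : ℕ) : ℝ) *
          ((-(2 / Real.pi)) * ∑ j ∈ Finset.Icc 2 (p * m), 1 / (2 * (j : ℝ) - 1) -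
            (-(2 / Real.pi)) * ∑ j ∈ Finset.Icc 2 m, 1 / (2 * (j : ℝ) - 1)))) ^ 2 *
        ((p * m : ℕ) : ℝ) ^ (2 * k) * (1 + Real.log ((p * m : ℕ) : ℝ)) ^ 2
      ≤ C * ((g p) ^ 2 * ((p * m : ℕ) : ℝ) ^ (2 * (k - 1))) := by
    intro p
    rcases le_or_gt p 1 with hp | hp
    · rw [hg0 p hp]
      simp
    · -- p ≥ 2
      have hp2 : 2 ≤ p := hp
      -- rewrite the Ω difference
      have hIcc : ∀ n : ℕ, Finset.Icc 2 n = Finset.Ioc 1 n := fun n => Finset.Icc_add_one_left_eq_Ioc 1 n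
      set S : ℝ := ∑ j ∈ Finset.Ioc m (p * m), (1 / (2 * (j : ℝ) - 1)) with hSdef
      have hpm : 1 ≤ m := by omega
      have hmpm : m ≤ p * m := Nat.le_mul_of_pos_left m (by omega)
      have hdiff : (∑ j ∈ Finset.Icc 2 (p * m), 1 / (2 * (j : ℝ) - 1)) -
          (∑ j ∈ Finset.Icc 2 m, 1 / (2 * (j : ℝ) - 1)) = S := by
        rw [hIcc, hIcc, ← Finset.sum_Ioc_consecutive _ (by omega : 1 ≤ m) hmpm]
        ring
      have homega : (-(2 / Real.pi)) * ∑ j ∈ Finset.Icc 2 (p * m), 1 / (2 * (j : ℝ) - 1) -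
          (-(2 / Real.pi)) * ∑ j ∈ Finset.Icc 2 m, 1 / (2 * (j : ℝ) - 1) = -(2 / Real.pi) * S := by
        rw [← mul_sub, hdiff]
      rw [homega]
      have hS4 : (1/4 : ℝ) ≤ S := sum_ge_quarter m p hm hp2
      have hSpos : 0 < S := by linarith
      have hL : 1 + Real.log ((p * m : ℕ) : ℝ) ≤ A * S := log_le_sum m p hm hp2
      have hLpos : (0:ℝ) < 1 + Real.log ((p * m : ℕ) : ℝ) := by
        have : (1:ℝ) ≤ ((p*m : ℕ) : ℝ) := by exact_mod_cast Nat.one_le_iff_ne_zero.mpr (by positivity)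
        nlinarith [Real.log_nonneg this]
      have hpmpos : (0:ℝ) < ((p * m : ℕ) : ℝ) := by
        have : 0 < p * m := by positivity
        exact_mod_cast this
      have hkk : 2 * k = 2 * (k - 1) + 2 := by omega
      -- compute the left side
      have hexp : (g p / (((p * m : ℕ) : ℝ) * (-(2 / Real.pi) * S))) ^ 2 *
          ((p * m : ℕ) : ℝ) ^ (2 * k) * (1 + Real.log ((p * m : ℕ) : ℝ)) ^ 2 =
          (g p) ^ 2 * ((p * m : ℕ) : ℝ) ^ (2 * (k - 1)) *
            ((1 + Real.log ((p * m : ℕ) : ℝ)) ^ 2 / ((2 / Real.pi) ^ 2 * S ^ 2)) := by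
        rw [hkk, pow_add]
        field_simp
      rw [hexp]
      have hfrac : (1 + Real.log ((p * m : ℕ) : ℝ)) ^ 2 / ((2 / Real.pi) ^ 2 * S ^ 2) ≤ C := by
        rw [div_le_iff₀ (by positivity)]
        have hsq : (1 + Real.log ((p * m : ℕ) : ℝ)) ^ 2 ≤ (A * S) ^ 2 := by
          apply pow_le_pow_left₀ hLpos.le hL
        have hCeq : C * ((2 / Real.pi) ^ 2 * S ^ 2) = A^2 * S^2 := by
          rw [hC]
          field_simp
          ring
        rw [hCeq]
        calc (1 + Real.log ((p * m : ℕ) : ℝ)) ^ 2 ≤ (A * S)^2 := hsq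
          _ = A^2 * S^2 := by ring
      calc (g p) ^ 2 * ((p * m : ℕ) : ℝ) ^ (2 * (k - 1)) *
            ((1 + Real.log ((p * m : ℕ) : ℝ)) ^ 2 / ((2 / Real.pi) ^ 2 * S ^ 2))
          ≤ (g p) ^ 2 * ((p * m : ℕ) : ℝ) ^ (2 * (k - 1)) * C := by
            apply mul_le_mul_of_nonneg_left hfrac (by positivity)
        _ = C * ((g p) ^ 2 * ((p * m : ℕ) : ℝ) ^ (2 * (k - 1))) := by ring
  -- summability of the left side
  have hnonneg : ∀ p : ℕ, (0:ℝ) ≤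
      (g p / (((p * m : ℕ) : ℝ) *
          ((-(2 / Real.pi)) * ∑ j ∈ Finset.Icc 2 (p * m), 1 / (2 * (j : ℝ) - 1) -
            (-(2 / Real.pi)) * ∑ j ∈ Finset.Icc 2 m, 1 / (2 * (j : ℝ) - 1)))) ^ 2 *
        ((p * m : ℕ) : ℝ) ^ (2 * k) * (1 + Real.log ((p * m : ℕ) : ℝ)) ^ 2 := by
    intro p
    positivity
  have hsum2 : Summable (fun p : ℕ => C * ((g p) ^ 2 * ((p * m : ℕ) : ℝ) ^ (2 * (k - 1)))) :=
    hsum.mul_left C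
  have hsumL : Summable (fun p : ℕ =>
      (g p / (((p * m : ℕ) : ℝ) *
          ((-(2 / Real.pi)) * ∑ j ∈ Finset.Icc 2 (p * m), 1 / (2 * (j : ℝ) - 1) -
            (-(2 / Real.pi)) * ∑ j ∈ Finset.Icc 2 m, 1 / (2 * (j : ℝ) - 1)))) ^ 2 *
        ((p * m : ℕ) : ℝ) ^ (2 * k) * (1 + Real.log ((p * m : ℕ) : ℝ)) ^ 2) :=
    Summable.of_nonneg_of_le hnonneg key hsum2
  calc (∑' p : ℕ,
          (g p / (((p * m : ℕ) : ℝ) *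
              ((-(2 / Real.pi)) * ∑ j ∈ Finset.Icc 2 (p * m), 1 / (2 * (j : ℝ) - 1) -
                (-(2 / Real.pi)) * ∑ j ∈ Finset.Icc 2 m, 1 / (2 * (j : ℝ) - 1)))) ^ 2 *
            ((p * m : ℕ) : ℝ) ^ (2 * k) * (1 + Real.log ((p * m : ℕ) : ℝ)) ^ 2)
      ≤ ∑' p : ℕ, C * ((g p) ^ 2 * ((p * m : ℕ) : ℝ) ^ (2 * (k - 1))) :=
        Summable.tsum_le_tsum key hsumL hsum2
    _ = C * ∑' p : ℕ, (g p) ^ 2 * ((p * m : ℕ) : ℝ) ^ (2 * (k - 1)) := tsum_mul_left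
end
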